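/- Let T be a Tambara functor on a finite group G. For ideals 𝔦_1, 𝔦_2, 𝔦_3 ⊆ T, the product is associative: (𝔦_1𝔦_2)𝔦_3 = 𝔦_1(𝔦_2𝔦_3); indeed both equal the ideal whose value at X is { p_+(a_1 a_2 a_3) : p ∈ G-Set(A,X), a_i ∈ 𝔦_i(A) }. -/

import Mathlib

set_option autoImplicit false

/-! Finite G-sets -/

structure GSet (G : Type) [Group G] : Type 1 where
  carrier : Type
  [mulAction : MulAction G carrier]
  [finite : Finite carrier]

attribute [instance] GSet.mulAction GSet.finite

/-- Equivariant maps of finite `G`-sets. -/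
structure GSetHom {G : Type} [Group G] (X Y : GSet G) : Type where
  toFun : X.carrier → Y.carrier
  map_smul : ∀ (g : G) (x : X.carrier), toFun (g • x) = g • toFun x

namespace GSetHom

variable {G : Type} [Group G]

def id (X : GSet G) : GSetHom X X := ⟨fun x => x, fun _ _ => rfl⟩

def comp {X Y Z : GSet G} (g : GSetHom Y Z) (f : GSetHom X Y) : GSetHom X Z :=
  ⟨fun x => g.toFun (f.toFun x), fun a x => by
    show g.toFun (f.toFun (a • x)) = a • g.toFun (f.toFun x)
    rw [f.map_smul, g.map_smul]⟩

end GSetHom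

namespace GSet

variable {G : Type} [Group G]

/-- Binary disjoint union of `G`-sets. -/
def sum (X Y : GSet G) : GSet G where
  carrier := X.carrier ⊕ Y.carrier

def inl (X Y : GSet G) : GSetHom X (X.sum Y) := ⟨Sum.inl, fun _ _ => rfl⟩

def inr (X Y : GSet G) : GSetHom Y (X.sum Y) := ⟨Sum.inr, fun _ _ => rfl⟩

instance : MulAction G Empty where
  smul _ x := x.elim
  one_smul x := x.elim
  mul_smul _ _ x := x.elim

/-- The empty `G`-set. -/
def empty (G : Type) [Group G] : GSet G where
  carrier := Empty

/-- Finite disjoint unions of `G`-sets. -/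
def sigma {n : ℕ} (Xs : Fin n → GSet G) : GSet G where
  carrier := Σ i, (Xs i).carrier

def sigmaIncl {n : ℕ} (Xs : Fin n → GSet G) (i : Fin n) : GSetHom (Xs i) (sigma Xs) :=
  ⟨fun x => ⟨i, x⟩, fun _ _ => rfl⟩

/-- The canonical pullback of two `G`-maps. -/
def pullback {X Y Z : GSet G} (f : GSetHom X Z) (g : GSetHom Y Z) : GSet G where
  carrier := { q : X.carrier × Y.carrier // f.toFun q.1 = g.toFun q.2 }
  mulAction :=
  { smul := fun a q => ⟨a • q.val, by
      show f.toFun (a • q.val.1) = g.toFun (a • q.val.2)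
      rw [f.map_smul, g.map_smul, q.property]⟩
    one_smul := fun q => Subtype.ext (one_smul G q.val)
    mul_smul := fun a b q => Subtype.ext (mul_smul a b q.val) }

def pbFst {X Y Z : GSet G} (f : GSetHom X Z) (g : GSetHom Y Z) :
    GSetHom (pullback f g) X := ⟨fun q => q.val.1, fun _ _ => rfl⟩

def pbSnd {X Y Z : GSet G} (f : GSetHom X Z) (g : GSetHom Y Z) :
    GSetHom (pullback f g) Y := ⟨fun q => q.val.2, fun _ _ => rfl⟩

/-- The complement of the image of a `G`-map, as a `G`-set. -/
def compl {X Y : GSet G} (f : GSetHom X Y) : GSet G where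
  carrier := { y : Y.carrier // ∀ x, f.toFun x ≠ y }
  mulAction :=
  { smul := fun g y => ⟨g • y.val, fun x h => y.property (g⁻¹ • x) (by
      rw [f.map_smul, h, inv_smul_smul])⟩
    one_smul := fun y => Subtype.ext (one_smul G y.val)
    mul_smul := fun a b y => Subtype.ext (mul_smul a b y.val) }

def complIncl {X Y : GSet G} (f : GSetHom X Y) : GSetHom (compl f) Y :=
  ⟨fun y => y.val, fun _ _ => rfl⟩

/-- Points of Tambara's dependent product `Π_f(A)`: pairs `(y, σ)` of a point `y : Y`
and a section `σ` of `p` on the fiber `f⁻¹(y)` (encoded as an `Option`-valued function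
supported exactly on the fiber). -/
def PiProp {X Y A : GSet G} (f : GSetHom X Y) (p : GSetHom A X)
    (s : Y.carrier × (X.carrier → Option A.carrier)) : Prop :=
  (∀ x, (s.2 x).isSome = true ↔ f.toFun x = s.1) ∧
  (∀ x a, s.2 x = some a → p.toFun a = x)

def PiCar {X Y A : GSet G} (f : GSetHom X Y) (p : GSetHom A X) : Type :=
  { s : Y.carrier × (X.carrier → Option A.carrier) // PiProp f p s }

instance optionFinite {α : Type} [Finite α] : Finite (Option α) :=
  Finite.of_equiv _ (Equiv.optionEquivSumPUnit.{0,0} α).symm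

instance piFinite {X Y A : GSet G} (f : GSetHom X Y) (p : GSetHom A X) :
    Finite (PiCar f p) := by
  unfold PiCar; infer_instance

def piSmul {X Y A : GSet G} (f : GSetHom X Y) (p : GSetHom A X) (g : G)
    (s : PiCar f p) : PiCar f p :=
  ⟨(g • s.val.1, fun x => (s.val.2 (g⁻¹ • x)).map (g • ·)), by
    constructor
    · intro x
      rw [Option.isSome_map, s.property.1 (g⁻¹ • x), f.map_smul]
      constructor
      · intro h; rw [← h, smul_inv_smul]
      · intro h; rw [h, inv_smul_smul]
    · intro x a ha
      rcases Option.map_eq_some_iff.mp ha with ⟨b, hb, rfl⟩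
      rw [p.map_smul, s.property.2 _ _ hb, smul_inv_smul]⟩

instance piAction {X Y A : GSet G} (f : GSetHom X Y) (p : GSetHom A X) :
    MulAction G (PiCar f p) where
  smul := piSmul f p
  one_smul s := by
    apply Subtype.ext
    refine Prod.ext (one_smul G s.val.1) ?_
    funext x
    show (s.val.2 ((1:G)⁻¹ • x)).map ((1:G) • ·) = s.val.2 x
    rw [inv_one, one_smul]
    cases h : s.val.2 x <;> simp [one_smul]
  mul_smul a b s := by
    apply Subtype.ext
    refine Prod.ext (mul_smul a b s.val.1) ?_
    funext x
    show (s.val.2 ((a * b)⁻¹ • x)).map ((a * b) • ·)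
        = ((s.val.2 (b⁻¹ • (a⁻¹ • x))).map (b • ·)).map (a • ·)
    rw [Option.map_map, mul_inv_rev, mul_smul]
    cases h : s.val.2 (b⁻¹ • a⁻¹ • x) <;> simp [mul_smul, Function.comp]

/-- Tambara's dependent product `Π_f(A)` as a `G`-set. -/
def piObj {X Y A : GSet G} (f : GSetHom X Y) (p : GSetHom A X) : GSet G where
  carrier := PiCar f p

/-- The projection `π : Π_f(A) → Y`. -/
def piPr {X Y A : GSet G} (f : GSetHom X Y) (p : GSetHom A X) :
    GSetHom (piObj f p) Y := ⟨fun s => s.val.1, fun _ _ => rfl⟩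

theorem optGet {α : Type} {o : Option α} {a : α} (h : o = some a) :
    ∀ hs : o.isSome = true, o.get hs = a := by subst h; intro _; rfl

/-- The evaluation map `λ : X ×_Y Π_f(A) → A`, `(x, (y, σ)) ↦ σ(x)`. -/
def piEval {X Y A : GSet G} (f : GSetHom X Y) (p : GSetHom A X) :
    GSetHom (pullback f (piPr f p)) A where
  toFun z := (z.val.2.val.2 z.val.1).get (by
    rw [z.val.2.property.1 z.val.1]; exact z.property)
  map_smul g z := by
    have hs : (z.val.2.val.2 z.val.1).isSome = true := by
      rw [z.val.2.property.1 z.val.1]; exact z.property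
    obtain ⟨a, ha⟩ := Option.isSome_iff_exists.mp hs
    have h1 : z.val.2.val.2 z.val.1 = some a := ha
    have h2 : (g • z).val.2.val.2 (g • z).val.1 = some (g • a) := by
      show (z.val.2.val.2 (g⁻¹ • (g • z.val.1))).map (g • ·) = some (g • a)
      rw [inv_smul_smul, h1]; rfl
    simp only [optGet h2, optGet h1]

end GSet

namespace GSet

/-- A transitive (nonempty) finite `G`-set. -/
def IsTransitive {G : Type} [Group G] (X : GSet G) : Prop :=
  Nonempty X.carrier ∧ MulAction.IsPretransitive G X.carrier

end GSet

/-! Tambara functors -/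

/-- The underlying system of commutative rings of a Tambara functor. -/
structure TamData (G : Type) [Group G] : Type 1 where
  obj : GSet G → Type
  ring : ∀ X, CommRing (obj X)

attribute [instance] TamData.ring

/-- A Tambara functor on the finite group `G`: a system of commutative rings `obj X`
indexed by finite `G`-sets, together with restrictions `res`, additive transfers `tr`
and multiplicative transfers `nm`, functorial, additive, satisfying the Mackey
base-change conditions, the projection formula, and Tambara's distributive law. -/
structure TambaraFunctor (G : Type) [Group G] extends TamData G where
  res : ∀ {X Y : GSet G}, GSetHom X Y → (obj Y →+* obj X)
  tr : ∀ {X Y : GSet G}, GSetHom X Y → (obj X →+ obj Y)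
  nm : ∀ {X Y : GSet G}, GSetHom X Y → (obj X →* obj Y)
  res_id : ∀ {X : GSet G} (x : obj X), res (GSetHom.id X) x = x
  res_comp : ∀ {X Y Z : GSet G} (f : GSetHom X Y) (g : GSetHom Y Z) (z : obj Z),
    res f (res g z) = res (g.comp f) z
  tr_id : ∀ {X : GSet G} (x : obj X), tr (GSetHom.id X) x = x
  tr_comp : ∀ {X Y Z : GSet G} (f : GSetHom X Y) (g : GSetHom Y Z) (x : obj X),
    tr g (tr f x) = tr (g.comp f) x
  nm_id : ∀ {X : GSet G} (x : obj X), nm (GSetHom.id X) x = x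
  nm_comp : ∀ {X Y Z : GSet G} (f : GSetHom X Y) (g : GSetHom Y Z) (x : obj X),
    nm g (nm f x) = nm (g.comp f) x
  /-- additivity on binary disjoint unions -/
  add_bij : ∀ X Y : GSet G, Function.Bijective
    (fun t : obj (X.sum Y) => (res (GSet.inl X Y) t, res (GSet.inr X Y) t))
  /-- `T(∅)` is the zero ring -/
  empty_subsingleton : ∀ x y : obj (GSet.empty G), x = y
  /-- Mackey base change for the additive transfer -/
  tr_bc : ∀ {X Y Z : GSet G} (f : GSetHom X Z) (g : GSetHom Y Z) (x : obj X),
    res g (tr f x) = tr (GSet.pbSnd f g) (res (GSet.pbFst f g) x)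
  /-- Mackey base change for the multiplicative transfer -/
  nm_bc : ∀ {X Y Z : GSet G} (f : GSetHom X Z) (g : GSetHom Y Z) (x : obj X),
    res g (nm f x) = nm (GSet.pbSnd f g) (res (GSet.pbFst f g) x)
  /-- the projection formula -/
  proj_formula : ∀ {X Y : GSet G} (f : GSetHom X Y) (a : obj X) (b : obj Y),
    tr f (a * res f b) = tr f a * b
  /-- the norm of zero is the additive transfer of `1` from the complement of the image -/
  nm_zero : ∀ {X Y : GSet G} (f : GSetHom X Y), nm f (0 : obj X) = tr (GSet.complIncl f) 1
  /-- Tambara's distributive law, via the canonical exponential diagram on `Π_f(A)` -/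
  distrib : ∀ {X Y A : GSet G} (f : GSetHom X Y) (p : GSetHom A X) (a : obj A),
    nm f (tr p a) = tr (GSet.piPr f p)
      (nm (GSet.pbSnd f (GSet.piPr f p)) (res (GSet.piEval f p) a))

namespace TambaraFunctor

variable {G : Type} [Group G]

/-- `f_!(x) = f_•(x) - f_•(0)`. -/
def shriek (T : TambaraFunctor G) {X Y : GSet G} (f : GSetHom X Y) (x : T.obj X) :
    T.obj Y := T.nm f x - T.nm f 0

end TambaraFunctor

/-- A morphism of Tambara functors: a family of ring homomorphisms natural with respect
to restrictions, additive transfers and multiplicative transfers. -/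
structure TamHom {G : Type} [Group G] (T S : TambaraFunctor G) where
  app : ∀ X : GSet G, T.obj X →+* S.obj X
  app_res : ∀ {X Y : GSet G} (f : GSetHom X Y) (y : T.obj Y),
    app X (T.res f y) = S.res f (app Y y)
  app_tr : ∀ {X Y : GSet G} (f : GSetHom X Y) (x : T.obj X),
    app Y (T.tr f x) = S.tr f (app X x)
  app_nm : ∀ {X Y : GSet G} (f : GSetHom X Y) (x : T.obj X),
    app Y (T.nm f x) = S.nm f (app X x)

namespace TambaraFunctor

variable {G : Type} [Group G]

/-- An ideal of a Tambara functor: a family of ideals closed under restrictions,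
additive transfers, and satisfying `f_•(𝔦(X)) ⊆ f_•(0) + 𝔦(Y)`
(equivalently, closed under `f_!`). -/
structure IsIdeal (T : TambaraFunctor G) (I : ∀ X : GSet G, Ideal (T.obj X)) : Prop where
  res_mem : ∀ {X Y : GSet G} (f : GSetHom X Y) {y : T.obj Y}, y ∈ I Y → T.res f y ∈ I X
  tr_mem : ∀ {X Y : GSet G} (f : GSetHom X Y) {x : T.obj X}, x ∈ I X → T.tr f x ∈ I Y
  shriek_mem : ∀ {X Y : GSet G} (f : GSetHom X Y) {x : T.obj X},
    x ∈ I X → T.shriek f x ∈ I Y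

/-- The ideal generated by a family of subsets: the intersection of all ideals
containing it. -/
def gen (T : TambaraFunctor G) (S : ∀ X : GSet G, Set (T.obj X)) (X : GSet G) :
    Ideal (T.obj X) :=
  ⨅ (I : ∀ Y : GSet G, Ideal (T.obj Y)) (_ : T.IsIdeal I) (_ : ∀ Y, S Y ⊆ ↑(I Y)), I X

/-- The family of subsets consisting of the single element `a ∈ T(A)`. -/
def single (T : TambaraFunctor G) (A : GSet G) (a : T.obj A) (X : GSet G) :
    Set (T.obj X) := { x | ∃ h : A = X, h ▸ a = x }

/-- The principal ideal `⟨a⟩` generated by `a ∈ T(A)`. -/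
def principal (T : TambaraFunctor G) (A : GSet G) (a : T.obj A) :
    ∀ X : GSet G, Ideal (T.obj X) := T.gen (T.single A a)

/-- The defining set of the product of two ideals. -/
def mulSet (T : TambaraFunctor G) (I J : ∀ X : GSet G, Ideal (T.obj X)) (X : GSet G) :
    Set (T.obj X) :=
  { x | ∃ (A : GSet G) (p : GSetHom A X) (a b : T.obj A),
      a ∈ I A ∧ b ∈ J A ∧ x = T.tr p (a * b) }

/-- The product of two ideals of a Tambara functor. -/
def mulIdl (T : TambaraFunctor G) (I J : ∀ X : GSet G, Ideal (T.obj X)) (X : GSet G) :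
    Ideal (T.obj X) := Ideal.span (T.mulSet I J X)

/-- Iterated products of ideals. -/
def mulMulti (T : TambaraFunctor G) :
    List (∀ X : GSet G, Ideal (T.obj X)) → ∀ X : GSet G, Ideal (T.obj X)
  | [] => fun _ => ⊤
  | I :: ls => T.mulIdl I (T.mulMulti ls)

/-- A prime ideal of a Tambara functor. -/
structure IsPrime (T : TambaraFunctor G) (P : ∀ X : GSet G, Ideal (T.obj X)) : Prop where
  isIdeal : T.IsIdeal P
  ne_top : ∃ X : GSet G, P X ≠ ⊤
  mem_or_mem : ∀ {X Y : GSet G}, X.IsTransitive → Y.IsTransitive →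
    ∀ {a : T.obj X} {b : T.obj Y},
      (∀ Z : GSet G, T.mulIdl (T.principal X a) (T.principal Y b) Z ≤ P Z) →
      a ∈ P X ∨ b ∈ P Y

/-- A maximal ideal of a Tambara functor. -/
structure IsMaximal (T : TambaraFunctor G) (M : ∀ X : GSet G, Ideal (T.obj X)) : Prop where
  isIdeal : T.IsIdeal M
  ne_top : ∃ X : GSet G, M X ≠ ⊤
  eq_of_le : ∀ K : ∀ X : GSet G, Ideal (T.obj X), T.IsIdeal K →
    (∀ X, M X ≤ K X) → (K = M ∨ ∀ X, K X = ⊤)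

end TambaraFunctor

namespace GSet

/-- The `G`-set `G/e`, i.e. `G` with the left regular action. -/
def regular (G : Type) [Group G] [Finite G] : GSet G where
  carrier := G

/-- Right multiplication `G/e → G/e`, an equivariant map. -/
def rightMul {G : Type} [Group G] [Finite G] (g : G) :
    GSetHom (regular G) (regular G) :=
  ⟨fun x => (id x : G) * g, fun a x => mul_assoc a x g⟩

end GSet

/-! The product of two ideals is already closed under addition, so its defining set is the
whole ideal. For the sum `p₊(ab) + q₊(a'b')` one transfers everything to `A ⊔ B`: transfers
along the two summand inclusions multiply componentwise, up to the units `u = s₊(1)` for the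
projections `s` of the self-pullbacks of the inclusions, which are absorbed into `a` and `a'`.
With the projection formula, `p₊(q₊(a₁a₂)·a₃) = (p ∘ q)₊(a₁a₂·q*(a₃))`, the sets of both
bracketings then agree with the set of all `p₊(a₁a₂a₃)`. -/

theorem GSetHom.ext {G : Type} [Group G] {X Y : GSet G} {f g : GSetHom X Y}
    (h : ∀ x, f.toFun x = g.toFun x) : f = g := by
  cases f
  cases g
  congr
  exact funext h

namespace GSet

variable {G : Type} [Group G]

def diag {X Y : GSet G} (f : GSetHom X Y) : GSetHom X (pullback f f) :=
  ⟨fun x => ⟨(x, x), rfl⟩, fun _ _ => rfl⟩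

theorem pbSnd_comp_diag {X Y : GSet G} (f : GSetHom X Y) :
    (pbSnd f f).comp (diag f) = GSetHom.id X :=
  GSetHom.ext fun _ => rfl

theorem diag_comp_pbSnd {X Y : GSet G} {f : GSetHom X Y} (hf : Function.Injective f.toFun) :
    (diag f).comp (pbSnd f f) = GSetHom.id (pullback f f) :=
  GSetHom.ext fun q => Subtype.ext (Prod.ext (hf q.property).symm rfl)

theorem pbFst_eq_pbSnd {X Y : GSet G} {f : GSetHom X Y} (hf : Function.Injective f.toFun) :
    pbFst f f = pbSnd f f :=
  GSetHom.ext fun q => hf q.property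

theorem isEmpty_pullback_inl_inr (A B : GSet G) :
    IsEmpty (pullback (inl A B) (inr A B)).carrier :=
  ⟨fun q => Sum.inl_ne_inr q.property⟩

theorem isEmpty_pullback_inr_inl (A B : GSet G) :
    IsEmpty (pullback (inr A B) (inl A B)).carrier :=
  ⟨fun q => Sum.inr_ne_inl q.property⟩

end GSet

namespace GSetHom

variable {G : Type} [Group G] {A B X : GSet G}

def sumElim (p : GSetHom A X) (q : GSetHom B X) : GSetHom (A.sum B) X where
  toFun := Sum.elim p.toFun q.toFun
  map_smul g s := by
    cases s with
    | inl a => exact p.map_smul g a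
    | inr b => exact q.map_smul g b

theorem sumElim_comp_inl (p : GSetHom A X) (q : GSetHom B X) :
    (sumElim p q).comp (GSet.inl A B) = p :=
  ext fun _ => rfl

theorem sumElim_comp_inr (p : GSetHom A X) (q : GSetHom B X) :
    (sumElim p q).comp (GSet.inr A B) = q :=
  ext fun _ => rfl

end GSetHom

namespace TambaraFunctor

variable {G : Type} [Group G] (T : TambaraFunctor G)

theorem subsingleton_obj {X : GSet G} (h : IsEmpty X.carrier) : Subsingleton (T.obj X) := by
  let u : GSetHom X (GSet.empty G) := ⟨fun x => h.elim x, fun _ x => h.elim x⟩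
  let v : GSetHom (GSet.empty G) X := ⟨Empty.elim, fun _ e => e.elim⟩
  have hvu : v.comp u = GSetHom.id X := GSetHom.ext fun x => h.elim x
  have res_res : ∀ x : T.obj X, T.res u (T.res v x) = x := fun x => by
    rw [T.res_comp, hvu, T.res_id]
  exact ⟨fun x y => by rw [← res_res x, ← res_res y, T.empty_subsingleton (T.res v x)]⟩

theorem res_tr_eq_zero {X Y Z : GSet G} (f : GSetHom X Z) (g : GSetHom Y Z)
    (h : IsEmpty (GSet.pullback f g).carrier) (x : T.obj X) : T.res g (T.tr f x) = 0 := by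
  have := T.subsingleton_obj h
  rw [T.tr_bc, Subsingleton.elim (T.res (GSet.pbFst f g) x) 0, map_zero]

theorem tr_mul_tr_eq_zero {X Y Z : GSet G} (f : GSetHom X Z) (g : GSetHom Y Z)
    (h : IsEmpty (GSet.pullback g f).carrier) (x : T.obj X) (y : T.obj Y) :
    T.tr f x * T.tr g y = 0 := by
  rw [← T.proj_formula, T.res_tr_eq_zero g f h, mul_zero, map_zero]

theorem tr_tr_mul {X Y Z : GSet G} (q : GSetHom X Y) (p : GSetHom Y Z) (a : T.obj X)
    (b : T.obj Y) : T.tr p (T.tr q a * b) = T.tr (p.comp q) (a * T.res q b) := by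
  rw [← T.proj_formula, T.tr_comp]

section Injective

variable {X Y : GSet G} {f : GSetHom X Y}

theorem res_tr_of_injective (hf : Function.Injective f.toFun) (x : T.obj X) :
    T.res f (T.tr f x) = T.tr (GSet.pbSnd f f) 1 * x := by
  rw [T.tr_bc, GSet.pbFst_eq_pbSnd hf, ← T.proj_formula, one_mul]

/-- The inverse is `diag*(diag₊(1))`, as `pbSnd f f` and `diag f` are mutually inverse. -/
theorem isUnit_tr_pbSnd_one (hf : Function.Injective f.toFun) :
    IsUnit (T.tr (GSet.pbSnd f f) 1) := by
  refine IsUnit.of_mul_eq_one (T.res (GSet.diag f) (T.tr (GSet.diag f) 1)) ?_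
  rw [← T.proj_formula, one_mul, T.res_comp, GSet.diag_comp_pbSnd hf, T.res_id, T.tr_comp,
    GSet.pbSnd_comp_diag, T.tr_id]

theorem tr_mul_tr_of_injective (hf : Function.Injective f.toFun) (x y : T.obj X) :
    T.tr f x * T.tr f y = T.tr f (T.tr (GSet.pbSnd f f) 1 * x * y) := by
  rw [← T.proj_formula, T.res_tr_of_injective hf, mul_left_comm, mul_assoc]

end Injective

theorem tr_inl_add_tr_inr_mul {A B : GSet G} (a a' : T.obj A) (b b' : T.obj B) :
    (T.tr (GSet.inl A B) a + T.tr (GSet.inr A B) b) *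
        (T.tr (GSet.inl A B) a' + T.tr (GSet.inr A B) b') =
      T.tr (GSet.inl A B) (T.tr (GSet.pbSnd (GSet.inl A B) (GSet.inl A B)) 1 * a * a') +
        T.tr (GSet.inr A B) (T.tr (GSet.pbSnd (GSet.inr A B) (GSet.inr A B)) 1 * b * b') := by
  rw [add_mul, mul_add, mul_add, T.tr_mul_tr_of_injective Sum.inl_injective,
    T.tr_mul_tr_of_injective Sum.inr_injective,
    T.tr_mul_tr_eq_zero _ _ (GSet.isEmpty_pullback_inr_inl A B),
    T.tr_mul_tr_eq_zero _ _ (GSet.isEmpty_pullback_inl_inr A B), add_zero, zero_add]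

def TrClosed (I : ∀ X : GSet G, Ideal (T.obj X)) : Prop :=
  ∀ {X Y : GSet G} (f : GSetHom X Y) {x : T.obj X}, x ∈ I X → T.tr f x ∈ I Y

def mulSet₃ (I₁ I₂ I₃ : ∀ X : GSet G, Ideal (T.obj X)) (X : GSet G) : Set (T.obj X) :=
  { x | ∃ (A : GSet G) (p : GSetHom A X) (a₁ a₂ a₃ : T.obj A),
      a₁ ∈ I₁ A ∧ a₂ ∈ I₂ A ∧ a₃ ∈ I₃ A ∧ x = T.tr p (a₁ * a₂ * a₃) }

section MulSet

variable {T} {I J : ∀ X : GSet G, Ideal (T.obj X)}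

theorem mul_mem_mulSet {A : GSet G} {a b : T.obj A} (ha : a ∈ I A) (hb : b ∈ J A) :
    a * b ∈ T.mulSet I J A :=
  ⟨A, GSetHom.id A, a, b, ha, hb, (T.tr_id _).symm⟩

theorem zero_mem_mulSet (X : GSet G) : (0 : T.obj X) ∈ T.mulSet I J X :=
  ⟨GSet.empty G, ⟨Empty.elim, fun _ e => e.elim⟩, 0, 0, zero_mem _, zero_mem _,
    by rw [mul_zero, map_zero]⟩

theorem mul_mem_mulSet_left {X : GSet G} (c : T.obj X) {x : T.obj X}
    (hx : x ∈ T.mulSet I J X) : c * x ∈ T.mulSet I J X := by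
  obtain ⟨A, p, a, b, ha, hb, rfl⟩ := hx
  refine ⟨A, p, a, b * T.res p c, ha, Ideal.mul_mem_right _ _ hb, ?_⟩
  rw [← mul_assoc, T.proj_formula, mul_comm]

theorem add_mem_mulSet (hI : T.TrClosed I) (hJ : T.TrClosed J) {X : GSet G} {x y : T.obj X}
    (hx : x ∈ T.mulSet I J X) (hy : y ∈ T.mulSet I J X) : x + y ∈ T.mulSet I J X := by
  obtain ⟨A, p, a, b, ha, hb, rfl⟩ := hx
  obtain ⟨B, q, a', b', ha', hb', rfl⟩ := hy
  obtain ⟨v, hv⟩ :=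
    (T.isUnit_tr_pbSnd_one (f := GSet.inl A B) Sum.inl_injective).exists_right_inv
  obtain ⟨v', hv'⟩ :=
    (T.isUnit_tr_pbSnd_one (f := GSet.inr A B) Sum.inr_injective).exists_right_inv
  refine ⟨A.sum B, p.sumElim q,
    T.tr (GSet.inl A B) (v * a) + T.tr (GSet.inr A B) (v' * a'),
    T.tr (GSet.inl A B) b + T.tr (GSet.inr A B) b',
    add_mem (hI _ (Ideal.mul_mem_left _ _ ha)) (hI _ (Ideal.mul_mem_left _ _ ha')),
    add_mem (hJ _ hb) (hJ _ hb'), ?_⟩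
  rw [tr_inl_add_tr_inr_mul, ← mul_assoc, hv, one_mul, ← mul_assoc, hv', one_mul, map_add,
    T.tr_comp, T.tr_comp, GSetHom.sumElim_comp_inl, GSetHom.sumElim_comp_inr]

theorem coe_mulIdl (hI : T.TrClosed I) (hJ : T.TrClosed J) (X : GSet G) :
    (T.mulIdl I J X : Set (T.obj X)) = T.mulSet I J X := by
  refine subset_antisymm (fun x hx => ?_) Ideal.subset_span
  induction hx using Submodule.span_induction with
  | mem x hx => exact hx
  | zero => exact zero_mem_mulSet X
  | add x y _ _ hx hy => exact add_mem_mulSet hI hJ hx hy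
  | smul c x _ hx => exact mul_mem_mulSet_left c hx

theorem trClosed_mulIdl (hI : T.TrClosed I) (hJ : T.TrClosed J) : T.TrClosed (T.mulIdl I J) := by
  intro X Y f x hx
  rw [← SetLike.mem_coe, coe_mulIdl hI hJ] at hx ⊢
  obtain ⟨A, p, a, b, ha, hb, rfl⟩ := hx
  exact ⟨A, f.comp p, a, b, ha, hb, T.tr_comp _ _ _⟩

end MulSet

variable {T} {I₁ I₂ I₃ : ∀ X : GSet G, Ideal (T.obj X)}

theorem coe_mulIdl_mulIdl_left (h₁ : T.TrClosed I₁) (h₂ : T.TrClosed I₂) (h₃ : T.IsIdeal I₃)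
    (X : GSet G) :
    (T.mulIdl (T.mulIdl I₁ I₂) I₃ X : Set (T.obj X)) = T.mulSet₃ I₁ I₂ I₃ X := by
  rw [coe_mulIdl (trClosed_mulIdl h₁ h₂) h₃.tr_mem]
  ext x
  constructor
  · rintro ⟨A, p, c, a₃, hc, m₃, rfl⟩
    rw [← SetLike.mem_coe, coe_mulIdl h₁ h₂] at hc
    obtain ⟨B, q, a₁, a₂, m₁, m₂, rfl⟩ := hc
    exact ⟨B, p.comp q, a₁, a₂, T.res q a₃, m₁, m₂, h₃.res_mem q m₃, T.tr_tr_mul _ _ _ _⟩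
  · rintro ⟨A, p, a₁, a₂, a₃, m₁, m₂, m₃, rfl⟩
    exact ⟨A, p, a₁ * a₂, a₃, Ideal.subset_span (mul_mem_mulSet m₁ m₂), m₃, rfl⟩

theorem coe_mulIdl_mulIdl_right (h₁ : T.IsIdeal I₁) (h₂ : T.TrClosed I₂) (h₃ : T.TrClosed I₃)
    (X : GSet G) :
    (T.mulIdl I₁ (T.mulIdl I₂ I₃) X : Set (T.obj X)) = T.mulSet₃ I₁ I₂ I₃ X := by
  rw [coe_mulIdl h₁.tr_mem (trClosed_mulIdl h₂ h₃)]
  ext x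
  constructor
  · rintro ⟨A, p, a₁, c, m₁, hc, rfl⟩
    rw [← SetLike.mem_coe, coe_mulIdl h₂ h₃] at hc
    obtain ⟨B, q, a₂, a₃, m₂, m₃, rfl⟩ := hc
    refine ⟨B, p.comp q, T.res q a₁, a₂, a₃, h₁.res_mem q m₁, m₂, m₃, ?_⟩
    rw [mul_comm, T.tr_tr_mul, mul_comm, mul_assoc]
  · rintro ⟨A, p, a₁, a₂, a₃, m₁, m₂, m₃, rfl⟩
    exact ⟨A, p, a₁, a₂ * a₃, m₁, Ideal.subset_span (mul_mem_mulSet m₂ m₃), by rw [mul_assoc]⟩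

end TambaraFunctor

theorem mulIdl_assoc_general (G : Type) [Group G] (T : TambaraFunctor G)
    (I₁ I₂ I₃ : ∀ X : GSet G, Ideal (T.obj X))
    (h₁ : T.IsIdeal I₁) (h₂ : T.IsIdeal I₂) (h₃ : T.IsIdeal I₃) :
    T.mulIdl (T.mulIdl I₁ I₂) I₃ = T.mulIdl I₁ (T.mulIdl I₂ I₃) ∧
    (∀ X : GSet G, (T.mulIdl (T.mulIdl I₁ I₂) I₃ X : Set (T.obj X)) =
      { x | ∃ (A : GSet G) (p : GSetHom A X) (a₁ a₂ a₃ : T.obj A),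
          a₁ ∈ I₁ A ∧ a₂ ∈ I₂ A ∧ a₃ ∈ I₃ A ∧ x = T.tr p (a₁ * a₂ * a₃) }) := by
  have left := TambaraFunctor.coe_mulIdl_mulIdl_left h₁.tr_mem h₂.tr_mem h₃
  have right := TambaraFunctor.coe_mulIdl_mulIdl_right h₁ h₂.tr_mem h₃.tr_mem
  exact ⟨funext fun X => SetLike.coe_injective ((left X).trans (right X).symm), left⟩

/-- products of ideals are associative; the triple product has levels
`{ p_+(a₁a₂a₃) }`. -/
theorem mulIdl_assoc (G : Type) [Group G] [Finite G] (T : TambaraFunctor G)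
    (I₁ I₂ I₃ : ∀ X : GSet G, Ideal (T.obj X))
    (h₁ : T.IsIdeal I₁) (h₂ : T.IsIdeal I₂) (h₃ : T.IsIdeal I₃) :
    T.mulIdl (T.mulIdl I₁ I₂) I₃ = T.mulIdl I₁ (T.mulIdl I₂ I₃) ∧
    (∀ X : GSet G, (T.mulIdl (T.mulIdl I₁ I₂) I₃ X : Set (T.obj X)) =
      { x | ∃ (A : GSet G) (p : GSetHom A X) (a₁ a₂ a₃ : T.obj A),
          a₁ ∈ I₁ A ∧ a₂ ∈ I₂ A ∧ a₃ ∈ I₃ A ∧ x = T.tr p (a₁ * a₂ * a₃) }) :=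
  mulIdl_assoc_general G T I₁ I₂ I₃ h₁ h₂ h₃
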